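/- Goldberg's lemma, part (i): Let φ ∈ C_c(ℝ^d) with supp φ ⊂ B(0,1) and ∫φ = 1. There exists C = C(d,φ) > 0 such that for every f ∈ L¹(ℝ^d), the convolution φ*f lies in the local Hardy space h¹(ℝ^d) and ‖φ*f‖_{h¹} ≤ C ‖f‖_{L¹}. -/

import Mathlib

open MeasureTheory Metric Filter Topology

/-- Euclidean space `ℝ^d`. -/
noncomputable abbrev Euc (d : ℕ) := EuclideanSpace ℝ (Fin d)

/-- Convolution `(f * g)(x) = ∫ f(y) g(x - y) dy`. -/
noncomputable def conv {d : ℕ} (f g : Euc d → ℝ) (x : Euc d) : ℝ :=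
  ∫ y, f y * g (x - y)

/-- Dilation `ψ_t(x) = t^{-d} ψ(x/t)`. -/
noncomputable def dilate {d : ℕ} (ψ : Euc d → ℝ) (t : ℝ) (x : Euc d) : ℝ :=
  t ^ (-(d : ℝ)) * ψ (t⁻¹ • x)

/-- The class `𝒜` of Schwartz functions with `|ψ(x)| + |∇ψ(x)| ≤ (1+|x|²)^{-(d+1)}`. -/
def calA (d : ℕ) : Set (Euc d → ℝ) :=
  {ψ | (∃ Ψ : SchwartzMap (Euc d) ℝ, ψ = Ψ) ∧
    ∀ x, |ψ x| + ‖fderiv ℝ ψ x‖ ≤ (1 + ‖x‖ ^ 2) ^ (-((d : ℝ) + 1))}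

/-- Grand maximal function `𝔐f(x) = sup_{ψ ∈ 𝒜} sup_{|y-x| < t} |f*ψ_t(y)|`. -/
noncomputable def grandMax {d : ℕ} (f : Euc d → ℝ) (x : Euc d) : ℝ :=
  sSup {r | ∃ ψ ∈ calA d, ∃ t, 0 < t ∧ ∃ y, dist y x < t ∧ r = |conv f (dilate ψ t) y|}

/-- Local grand maximal function `𝔪f(x) = sup_{ψ ∈ 𝒜} sup_{|y-x| < t < 1} |f*ψ_t(y)|`. -/
noncomputable def locMax {d : ℕ} (f : Euc d → ℝ) (x : Euc d) : ℝ :=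
  sSup {r | ∃ ψ ∈ calA d, ∃ t, 0 < t ∧ t < 1 ∧ ∃ y, dist y x < t ∧ r = |conv f (dilate ψ t) y|}

/-- `f ∈ H¹(ℝ^d)`. -/
def MemH1 {d : ℕ} (f : Euc d → ℝ) : Prop := Integrable f ∧ Integrable (grandMax f)

/-- `‖f‖_{H¹} = ‖𝔐f‖_{L¹}`. -/
noncomputable def H1norm {d : ℕ} (f : Euc d → ℝ) : ℝ := ∫ x, |grandMax f x|

/-- `f ∈ h¹(ℝ^d)`. -/
def Memh1 {d : ℕ} (f : Euc d → ℝ) : Prop := Integrable f ∧ Integrable (locMax f)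

/-- `‖f‖_{h¹} = ‖𝔪f‖_{L¹}`. -/
noncomputable def h1norm {d : ℕ} (f : Euc d → ℝ) : ℝ := ∫ x, |locMax f x|

/-- Mean of `f` over the ball `B(c,r)`. -/
noncomputable def ballAvg {d : ℕ} (f : Euc d → ℝ) (c : Euc d) (r : ℝ) : ℝ :=
  (volume (ball c r)).toReal⁻¹ * ∫ x in ball c r, f x

/-- Mean oscillation of `f` over the ball `B(c,r)`. -/
noncomputable def osc {d : ℕ} (f : Euc d → ℝ) (c : Euc d) (r : ℝ) : ℝ :=
  (volume (ball c r)).toReal⁻¹ * ∫ x in ball c r, |f x - ballAvg f c r|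

/-- Mean of `|f|` over the ball `B(c,r)`. -/
noncomputable def avgAbs {d : ℕ} (f : Euc d → ℝ) (c : Euc d) (r : ℝ) : ℝ :=
  (volume (ball c r)).toReal⁻¹ * ∫ x in ball c r, |f x|

/-- `‖f‖_{BMO}`. -/
noncomputable def BMOnorm {d : ℕ} (f : Euc d → ℝ) : ℝ :=
  sSup {s | ∃ c : Euc d, ∃ r, 0 < r ∧ s = osc f c r}

/-- `‖f‖_{bmo}`: oscillation over small balls plus averages of `|f|` over big balls. -/
noncomputable def bmoNorm {d : ℕ} (f : Euc d → ℝ) : ℝ :=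
  sSup {s | ∃ c : Euc d, ∃ r, 0 < r ∧ volume (ball c r) ≤ 1 ∧ s = osc f c r} +
  sSup {s | ∃ c : Euc d, ∃ r, 0 < r ∧ 1 ≤ volume (ball c r) ∧ s = avgAbs f c r}

/-- `f ∈ BMO(ℝ^d)`. -/
def MemBMO {d : ℕ} (f : Euc d → ℝ) : Prop :=
  LocallyIntegrable f volume ∧ ∃ M : ℝ, ∀ c r, 0 < r → osc f c r ≤ M

/-- `f ∈ bmo(ℝ^d)`. -/
def Membmo {d : ℕ} (f : Euc d → ℝ) : Prop :=
  LocallyIntegrable f volume ∧ ∃ M : ℝ, ∀ c r, 0 < r →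
    (volume (ball c r) ≤ 1 → osc f c r ≤ M) ∧ (1 ≤ volume (ball c r) → avgAbs f c r ≤ M)

/-- Continuous functions with compact support, `C_c(ℝ^d)`. -/
def CcFun (d : ℕ) : Set (Euc d → ℝ) := {φ | Continuous φ ∧ HasCompactSupport φ}

/-- `vmo(ℝ^d)`: the closure of `C_c(ℝ^d)` in the `bmo` norm. -/
def vmoSet (d : ℕ) : Set (Euc d → ℝ) :=
  {φ | Membmo φ ∧ ∀ ε : ℝ, 0 < ε → ∃ g ∈ CcFun d, bmoNorm (φ - g) < ε}

/-- `VMO(ℝ^d)`: the closure of `C_c(ℝ^d)` in the `BMO` norm. -/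
def VMOSet (d : ℕ) : Set (Euc d → ℝ) :=
  {φ | MemBMO φ ∧ ∀ ε : ℝ, 0 < ε → ∃ g ∈ CcFun d, BMOnorm (φ - g) < ε}

/-- Integral of `φ` against a finite signed measure `μ`. -/
noncomputable def smInt {d : ℕ} (μ : MeasureTheory.SignedMeasure (Euc d)) (φ : Euc d → ℝ) : ℝ :=
  (∫ x, φ x ∂μ.toJordanDecomposition.posPart) - ∫ x, φ x ∂μ.toJordanDecomposition.negPart

/-- Convolution `(φ * μ)(x) = ∫ φ(x - y) dμ(y)` of a function with a signed measure. -/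
noncomputable def convSM {d : ℕ} (φ : Euc d → ℝ) (μ : MeasureTheory.SignedMeasure (Euc d))
    (x : Euc d) : ℝ :=
  smInt μ (fun y => φ (x - y))

/-- Sup norm. -/
noncomputable def supNorm {d : ℕ} (φ : Euc d → ℝ) : ℝ := ⨆ x, |φ x|


/-!
For `|y - x| < t < 1`, associativity of convolution gives `(φ * f) * ψ_t (y) = f * (φ * ψ_t) (y)`.
Since `φ` is bounded and supported in the unit ball while every `ψ ∈ 𝒜` decays like
`|x|^{-(d+1)}` (a decay that dilation by `t ≤ 1` preserves), `|φ * ψ_t (a)| ≤ A (1 + |v|)^{-(d+1)}`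
whenever `|a - v| ≤ 1`, uniformly in `ψ` and `t`. Hence `𝔪(φ * f) ≤ A |f| * (1 + |·|)^{-(d+1)}`,
an integrable majorant of norm `A ‖f‖₁ ‖(1 + |·|)^{-(d+1)}‖₁`. Measurability of `𝔪(φ * f)`
follows from its lower semicontinuity.
-/

section ClassA

variable {d : ℕ} {ψ : Euc d → ℝ}

lemma continuous_of_mem_calA (hψ : ψ ∈ calA d) : Continuous ψ := by
  obtain ⟨Ψ, rfl⟩ := hψ.1
  exact Ψ.continuous

lemma integrable_of_mem_calA (hψ : ψ ∈ calA d) : Integrable ψ := by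
  obtain ⟨Ψ, rfl⟩ := hψ.1
  exact Ψ.integrable

lemma abs_le_of_mem_calA (hψ : ψ ∈ calA d) (x : Euc d) :
    |ψ x| ≤ ((1 + ‖x‖ ^ 2) ^ (d + 1))⁻¹ := by
  have h := (le_add_of_nonneg_right (norm_nonneg _)).trans (hψ.2 x)
  rwa [← Nat.cast_add_one, Real.rpow_neg (by positivity), Real.rpow_natCast] at h

lemma abs_le_one_of_mem_calA (hψ : ψ ∈ calA d) (x : Euc d) : |ψ x| ≤ 1 :=
  (abs_le_of_mem_calA hψ x).trans <| inv_le_one_of_one_le₀ <|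
    one_le_pow₀ (le_add_of_nonneg_right (by positivity))

lemma norm_pow_mul_abs_le_one_of_mem_calA (hψ : ψ ∈ calA d) (x : Euc d) :
    ‖x‖ ^ (d + 1) * |ψ x| ≤ 1 := by
  have hpos : 0 < (1 + ‖x‖ ^ 2) ^ (d + 1) := by positivity
  calc ‖x‖ ^ (d + 1) * |ψ x| ≤ (1 + ‖x‖ ^ 2) ^ (d + 1) * ((1 + ‖x‖ ^ 2) ^ (d + 1))⁻¹ := by
        gcongr
        · nlinarith [sq_nonneg (‖x‖ - 1)]
        · exact abs_le_of_mem_calA hψ x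
    _ = 1 := mul_inv_cancel₀ hpos.ne'

lemma integrable_inv_one_add_norm_sq_pow :
    Integrable fun x : Euc d => ((1 + ‖x‖ ^ 2) ^ (d + 1))⁻¹ := by
  have h := integrable_rpow_neg_one_add_norm_sq (μ := (volume : Measure (Euc d)))
    (r := 2 * (d + 1)) (by rw [finrank_euclideanSpace_fin]; linarith)
  refine h.congr (Eventually.of_forall fun x => ?_)
  dsimp only
  rw [neg_div, mul_div_cancel_left₀ _ two_ne_zero, ← Nat.cast_add_one,
    Real.rpow_neg (by positivity), Real.rpow_natCast]

lemma integral_abs_le_of_mem_calA (hψ : ψ ∈ calA d) :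
    ∫ x, |ψ x| ≤ ∫ x : Euc d, ((1 + ‖x‖ ^ 2) ^ (d + 1))⁻¹ :=
  integral_mono (integrable_of_mem_calA hψ).abs integrable_inv_one_add_norm_sq_pow
    (abs_le_of_mem_calA hψ)

end ClassA

section Dilation

variable {d : ℕ} {ψ : Euc d → ℝ} {t : ℝ}

lemma dilate_eq (ht : 0 < t) (x : Euc d) : dilate ψ t x = (t ^ d)⁻¹ * ψ (t⁻¹ • x) := by
  rw [dilate, Real.rpow_neg ht.le, Real.rpow_natCast]

lemma abs_dilate (ht : 0 < t) (x : Euc d) : |dilate ψ t x| = (t ^ d)⁻¹ * |ψ (t⁻¹ • x)| := by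
  rw [dilate_eq ht, abs_mul, abs_of_pos (by positivity)]

lemma continuous_dilate (hψ : Continuous ψ) (t : ℝ) : Continuous (dilate ψ t) :=
  continuous_const.mul (hψ.comp (continuous_const_smul t⁻¹))

lemma integrable_dilate (hψ : Integrable ψ) (ht : t ≠ 0) : Integrable (dilate ψ t) :=
  (hψ.comp_smul (inv_ne_zero ht)).const_mul _

lemma integral_abs_dilate (ht : 0 < t) : ∫ x, |dilate ψ t x| = ∫ x, |ψ x| := by
  simp_rw [abs_dilate ht]
  rw [integral_const_mul, Measure.integral_comp_inv_smul_of_nonneg volume (fun x => |ψ x|) ht.le,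
    finrank_euclideanSpace_fin, smul_eq_mul, inv_mul_cancel_left₀ (by positivity)]

lemma abs_dilate_le {M : ℝ} (hψ : ∀ x, |ψ x| ≤ M) (ht : 0 < t) (x : Euc d) :
    |dilate ψ t x| ≤ (t ^ d)⁻¹ * M := by
  rw [abs_dilate ht]
  gcongr
  exact hψ _

lemma norm_pow_mul_abs_dilate_le_one (hψ : ∀ x, ‖x‖ ^ (d + 1) * |ψ x| ≤ 1)
    (ht₀ : 0 < t) (ht₁ : t ≤ 1) (x : Euc d) : ‖x‖ ^ (d + 1) * |dilate ψ t x| ≤ 1 := by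
  have hx : ‖x‖ = t * ‖t⁻¹ • x‖ := by
    rw [norm_smul, Real.norm_eq_abs, abs_of_pos (inv_pos.2 ht₀), mul_inv_cancel_left₀ ht₀.ne']
  calc ‖x‖ ^ (d + 1) * |dilate ψ t x| = t * (‖t⁻¹ • x‖ ^ (d + 1) * |ψ (t⁻¹ • x)|) := by
        rw [abs_dilate ht₀, hx, mul_pow, pow_succ]
        field_simp
    _ ≤ 1 * 1 := by gcongr; exact hψ _
    _ = 1 := one_mul 1

end Dilation

section Convolution

variable {d : ℕ}

lemma conv_comm (f g : Euc d → ℝ) : conv f g = conv g f := by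
  ext x
  rw [conv, conv, ← integral_sub_left_eq_self _ volume x]
  simp_rw [sub_sub_cancel, mul_comm]

lemma abs_conv_le (f g : Euc d → ℝ) (x : Euc d) : |conv f g x| ≤ ∫ y, |f y| * |g (x - y)| := by
  simpa only [conv, Real.norm_eq_abs, abs_mul] using
    norm_integral_le_integral_norm (μ := volume) fun y => f y * g (x - y)

lemma integrable_conv {f g : Euc d → ℝ} (hf : Integrable f) (hg : Integrable g) :
    Integrable (conv f g) :=
  hf.integrable_convolution (ContinuousLinearMap.mul ℝ ℝ) hg

lemma integral_conv {f g : Euc d → ℝ} (hf : Integrable f) (hg : Integrable g) :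
    ∫ x, conv f g x = (∫ x, f x) * ∫ x, g x :=
  integral_convolution (𝕜 := ℝ) (ContinuousLinearMap.mul ℝ ℝ) hf hg

lemma conv_assoc {f g k : Euc d → ℝ} {B : ℝ} (hf : Integrable f) (hg : Integrable g)
    (hk : Continuous k) (hkB : ∀ x, |k x| ≤ B) (x : Euc d) :
    conv (conv f g) k x = conv f (conv g k) x := by
  refine convolution_assoc' (ContinuousLinearMap.mul ℝ ℝ) (ContinuousLinearMap.mul ℝ ℝ)
    (ContinuousLinearMap.mul ℝ ℝ) (ContinuousLinearMap.mul ℝ ℝ) (fun a b c => mul_assoc a b c)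
    (hf.ae_convolution_exists _ hg) (Eventually.of_forall fun y => ?_) ?_
  · exact hg.mul_bdd (hk.comp (continuous_sub_left y)).aestronglyMeasurable
      (Eventually.of_forall fun z => hkB _)
  · refine ((hf.convolution_integrand (ContinuousLinearMap.mul ℝ ℝ) hg).mul_bdd
      (hk.comp ((continuous_sub_left x).comp continuous_fst)).aestronglyMeasurable
      (Eventually.of_forall fun p => hkB _)).congr (Eventually.of_forall fun p => ?_)
    exact mul_assoc _ _ _

end Convolution

section DecayKernel

variable {d : ℕ}

noncomputable def decayKernel (d : ℕ) (v : Euc d) : ℝ := ((1 + ‖v‖) ^ (d + 1))⁻¹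

lemma decayKernel_nonneg (v : Euc d) : 0 ≤ decayKernel d v := by
  unfold decayKernel; positivity

lemma decayKernel_le_one (v : Euc d) : decayKernel d v ≤ 1 :=
  inv_le_one_of_one_le₀ <| one_le_pow₀ (le_add_of_nonneg_right (norm_nonneg v))

lemma continuous_decayKernel : Continuous (decayKernel d) :=
  ((continuous_const.add continuous_norm).pow _).inv₀ fun v =>
    (pow_pos (add_pos_of_pos_of_nonneg one_pos (norm_nonneg v)) _).ne'

lemma integrable_decayKernel : Integrable (decayKernel d) := by
  refine (integrable_one_add_norm (E := Euc d) (μ := volume) (r := d + 1) ?_).congr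
    (Eventually.of_forall fun v => ?_)
  · rw [finrank_euclideanSpace_fin]; linarith
  · dsimp only
    rw [decayKernel, ← Nat.cast_add_one, Real.rpow_neg (by positivity), Real.rpow_natCast]

end DecayKernel

lemma one_add_pow_mul_le {r c : ℝ} {n : ℕ} (hr : 0 ≤ r) (hc : 0 ≤ c) (h : r ^ n * c ≤ 1) :
    (1 + r) ^ n * c ≤ 2 ^ n * (c + 1) := by
  rcases le_total r 1 with hr1 | hr1
  · calc (1 + r) ^ n * c ≤ 2 ^ n * c := by gcongr; linarith
      _ ≤ 2 ^ n * (c + 1) := by gcongr; linarith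
  · calc (1 + r) ^ n * c ≤ (2 * r) ^ n * c := by gcongr; linarith
      _ = 2 ^ n * (r ^ n * c) := by ring
      _ ≤ 2 ^ n * (c + 1) := by gcongr; linarith

lemma one_add_norm_pow_mul_abs_dilate_le {d : ℕ} {ψ : Euc d → ℝ} {t : ℝ} (hψ : ψ ∈ calA d)
    (ht₀ : 0 < t) (ht₁ : t ≤ 1) {a v w : Euc d} (hav : ‖a - v‖ ≤ 1) (hw : ‖w‖ < 1) :
    (1 + ‖v‖) ^ (d + 1) * |dilate ψ t (a - w)| ≤ 6 ^ (d + 1) * (|dilate ψ t (a - w)| + 1) := by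
  have hv : 1 + ‖v‖ ≤ 3 * (1 + ‖a - w‖) := by
    have := norm_sub_le_norm_sub_add_norm_sub v a w
    have := norm_sub_norm_le v w
    rw [norm_sub_rev v a] at *
    linarith [norm_nonneg (a - w)]
  have hdecay := one_add_pow_mul_le (norm_nonneg (a - w)) (abs_nonneg _)
    (norm_pow_mul_abs_dilate_le_one (norm_pow_mul_abs_le_one_of_mem_calA hψ) ht₀ ht₁ (a - w))
  calc (1 + ‖v‖) ^ (d + 1) * |dilate ψ t (a - w)|
      ≤ (3 * (1 + ‖a - w‖)) ^ (d + 1) * |dilate ψ t (a - w)| := by gcongr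
    _ = 3 ^ (d + 1) * ((1 + ‖a - w‖) ^ (d + 1) * |dilate ψ t (a - w)|) := by
        rw [mul_pow, mul_assoc]
    _ ≤ 3 ^ (d + 1) * (2 ^ (d + 1) * (|dilate ψ t (a - w)| + 1)) := by gcongr
    _ = 6 ^ (d + 1) * (|dilate ψ t (a - w)| + 1) := by
        rw [show (6 : ℝ) = 3 * 2 by norm_num, mul_pow]; ring

lemma exists_abs_conv_dilate_le {d : ℕ} {φ : Euc d → ℝ} (hφ : Continuous φ)
    (hφs : HasCompactSupport φ) (hsupp : tsupport φ ⊆ ball (0 : Euc d) 1) :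
    ∃ A, 0 ≤ A ∧ ∀ ψ ∈ calA d, ∀ t, 0 < t → t ≤ 1 → ∀ a v : Euc d, ‖a - v‖ ≤ 1 →
      |conv φ (dilate ψ t) a| ≤ A * decayKernel d v := by
  obtain ⟨M, hM⟩ := hφs.exists_bound_of_continuous hφ
  have hM₀ : 0 ≤ M := (norm_nonneg _).trans (hM 0)
  set I := ∫ x : Euc d, ((1 + ‖x‖ ^ 2) ^ (d + 1))⁻¹
  have hI : 0 ≤ I := integral_nonneg fun x => by positivity
  refine ⟨6 ^ (d + 1) * (M * I + ∫ w, |φ w|), by positivity, ?_⟩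
  intro ψ hψ t ht₀ ht₁ a v hav
  set g := dilate ψ t
  have hg : Integrable fun w => |g (a - w)| :=
    (integrable_dilate (integrable_of_mem_calA hψ) ht₀.ne').abs.comp_sub_left a
  have hφ₁ : Integrable fun w => |φ w| := (hφ.integrable_of_hasCompactSupport hφs).abs
  have hshift : ∫ w, |g (a - w)| = ∫ w, |g w| :=
    integral_sub_left_eq_self (fun w => |g w|) volume a
  have hweight : ∀ w, |φ w| * |g (a - w)| ≤
      decayKernel d v * (6 ^ (d + 1) * (M * |g (a - w)| + |φ w|)) := by
    intro w
    by_cases hw : φ w = 0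
    · rw [hw, abs_zero, zero_mul]
      have := decayKernel_nonneg v
      positivity
    have hw₁ : ‖w‖ < 1 := by simpa using hsupp (subset_tsupport _ hw)
    rw [decayKernel, ← div_eq_inv_mul, le_div_iff₀ (by positivity)]
    calc |φ w| * |g (a - w)| * (1 + ‖v‖) ^ (d + 1)
        = |φ w| * ((1 + ‖v‖) ^ (d + 1) * |g (a - w)|) := by ring
      _ ≤ |φ w| * (6 ^ (d + 1) * (|g (a - w)| + 1)) :=
          mul_le_mul_of_nonneg_left (one_add_norm_pow_mul_abs_dilate_le hψ ht₀ ht₁ hav hw₁)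
            (abs_nonneg _)
      _ = 6 ^ (d + 1) * (|φ w| * |g (a - w)| + |φ w|) := by ring
      _ ≤ 6 ^ (d + 1) * (M * |g (a - w)| + |φ w|) := by
          gcongr
          exact hM w
  calc |conv φ g a| ≤ ∫ w, |φ w| * |g (a - w)| := abs_conv_le φ g a
    _ ≤ ∫ w, decayKernel d v * (6 ^ (d + 1) * (M * |g (a - w)| + |φ w|)) :=
        integral_mono_of_nonneg (Eventually.of_forall fun w => by positivity)
          (((hg.const_mul M).add hφ₁).const_mul _ |>.const_mul _) (Eventually.of_forall hweight)
    _ = decayKernel d v * (6 ^ (d + 1) * (M * (∫ w, |g w|) + ∫ w, |φ w|)) := by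
        rw [integral_const_mul, integral_const_mul, integral_add (hg.const_mul M) hφ₁,
          integral_const_mul, hshift]
    _ ≤ decayKernel d v * (6 ^ (d + 1) * (M * I + ∫ w, |φ w|)) := by
        have := decayKernel_nonneg v
        gcongr
        exact (integral_abs_dilate ht₀).trans_le (integral_abs_le_of_mem_calA hψ)
    _ = 6 ^ (d + 1) * (M * I + ∫ w, |φ w|) * decayKernel d v := mul_comm _ _

lemma abs_conv_conv_le {d : ℕ} {f φ k : Euc d → ℝ} {A B : ℝ} (hf : Integrable f)
    (hφ : Integrable φ) (hk : Continuous k) (hkB : ∀ z, |k z| ≤ B)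
    (hker : ∀ a v : Euc d, ‖a - v‖ ≤ 1 → |conv φ k a| ≤ A * decayKernel d v)
    {x y : Euc d} (hxy : dist y x ≤ 1) :
    |conv (conv φ f) k y| ≤ A * conv (fun u => |f u|) (decayKernel d) x := by
  have hbound : ∀ u, ‖A * decayKernel d (x - u)‖ ≤ |A| := fun u => by
    rw [Real.norm_eq_abs, abs_mul, abs_of_nonneg (decayKernel_nonneg _)]
    exact mul_le_of_le_one_right (abs_nonneg A) (decayKernel_le_one _)
  rw [conv_comm φ f, conv_assoc hf hφ hk hkB]
  calc |conv f (conv φ k) y| ≤ ∫ u, |f u| * |conv φ k (y - u)| := abs_conv_le _ _ _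
    _ ≤ ∫ u, |f u| * (A * decayKernel d (x - u)) := by
        refine integral_mono_of_nonneg (Eventually.of_forall fun u => by positivity)
          (hf.abs.mul_bdd ((continuous_decayKernel.comp (continuous_sub_left x)).const_mul A
            |>.aestronglyMeasurable) (Eventually.of_forall hbound))
          (Eventually.of_forall fun u => mul_le_mul_of_nonneg_left (hker _ _ ?_) (abs_nonneg _))
        rwa [sub_sub_sub_cancel_right, ← dist_eq_norm]
    _ = A * conv (fun u => |f u|) (decayKernel d) x := by
        rw [conv, ← integral_const_mul]
        simp_rw [mul_left_comm]

section LocalMaximalFunction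

variable {d : ℕ} {g : Euc d → ℝ}

def locMaxSet (g : Euc d → ℝ) (x : Euc d) : Set ℝ :=
  {r | ∃ ψ ∈ calA d, ∃ t, 0 < t ∧ t < 1 ∧ ∃ y, dist y x < t ∧ r = |conv g (dilate ψ t) y|}

lemma locMax_eq_sSup (x : Euc d) : locMax g x = sSup (locMaxSet g x) := rfl

lemma locMax_nonneg (x : Euc d) : 0 ≤ locMax g x :=
  Real.sSup_nonneg fun _ ⟨_, _, _, _, _, _, _, hr⟩ => hr ▸ abs_nonneg _

lemma eventually_mem_locMaxSet {r : ℝ} {x : Euc d} (hr : r ∈ locMaxSet g x) :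
    ∀ᶠ x' in 𝓝 x, r ∈ locMaxSet g x' := by
  obtain ⟨ψ, hψ, t, ht₀, ht₁, y, hyx, rfl⟩ := hr
  filter_upwards [ball_mem_nhds x (sub_pos.2 hyx)] with x' hx'
  refine ⟨ψ, hψ, t, ht₀, ht₁, y, ?_, rfl⟩
  linarith [dist_triangle y x x', mem_ball'.1 hx']

lemma lowerSemicontinuous_locMax (hbdd : ∀ x, BddAbove (locMaxSet g x)) :
    LowerSemicontinuous (locMax g) := by
  intro x r hr
  rcases lt_or_ge r 0 with hr₀ | hr₀
  · exact Eventually.of_forall fun x' => hr₀.trans_le (locMax_nonneg x')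
  have hne : (locMaxSet g x).Nonempty := by
    by_contra hemp
    rw [Set.not_nonempty_iff_eq_empty] at hemp
    rw [locMax_eq_sSup, hemp, Real.sSup_empty] at hr
    linarith
  obtain ⟨s, hs, hrs⟩ := exists_lt_of_lt_csSup hne hr
  filter_upwards [eventually_mem_locMaxSet hs] with x' hs'
  exact hrs.trans_le (le_csSup (hbdd x') hs')

lemma memh1_and_h1norm_le {T : Euc d → ℝ} (hg : Integrable g) (hT : Integrable T)
    (hT₀ : ∀ x, 0 ≤ T x) (hle : ∀ x, ∀ r ∈ locMaxSet g x, r ≤ T x) :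
    Memh1 g ∧ h1norm g ≤ ∫ x, T x := by
  have hmax : ∀ x, locMax g x ≤ T x := fun x => Real.sSup_le (hle x) (hT₀ x)
  have hmeas : Measurable (locMax g) :=
    (lowerSemicontinuous_locMax fun x => ⟨T x, hle x⟩).measurable
  have hint : Integrable (locMax g) :=
    hT.mono' hmeas.aestronglyMeasurable (Eventually.of_forall fun x => by
      rw [Real.norm_of_nonneg (locMax_nonneg x)]
      exact hmax x)
  refine ⟨⟨hg, hint⟩, ?_⟩
  simp_rw [h1norm, abs_of_nonneg (locMax_nonneg _)]
  exact integral_mono hint hT hmax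

end LocalMaximalFunction

theorem goldberg_i_general {d : ℕ} (φ : Euc d → ℝ) (hφ : φ ∈ CcFun d)
    (hsupp : tsupport φ ⊆ ball (0 : Euc d) 1) :
    ∃ C : ℝ, 0 < C ∧ ∀ f : Euc d → ℝ, Integrable f →
      Memh1 (conv φ f) ∧ h1norm (conv φ f) ≤ C * ∫ x, |f x| := by
  obtain ⟨A, hA₀, hker⟩ := exists_abs_conv_dilate_le hφ.1 hφ.2 hsupp
  have hφ₁ : Integrable φ := hφ.1.integrable_of_hasCompactSupport hφ.2
  have hK₀ : 0 ≤ ∫ v, decayKernel d v := integral_nonneg decayKernel_nonneg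
  refine ⟨A * (∫ v, decayKernel d v) + 1, by positivity, fun f hf => ?_⟩
  have hle : ∀ x, ∀ r ∈ locMaxSet (conv φ f) x,
      r ≤ A * conv (fun u => |f u|) (decayKernel d) x := by
    rintro x _ ⟨ψ, hψ, t, ht₀, ht₁, y, hyx, rfl⟩
    exact abs_conv_conv_le hf hφ₁ (continuous_dilate (continuous_of_mem_calA hψ) t)
      (abs_dilate_le (abs_le_one_of_mem_calA hψ) ht₀) (hker ψ hψ t ht₀ ht₁.le)
      (hyx.le.trans ht₁.le)
  have hmajorant₀ : ∀ x, 0 ≤ A * conv (fun u => |f u|) (decayKernel d) x := fun x =>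
    mul_nonneg hA₀ (integral_nonneg fun u => mul_nonneg (abs_nonneg _) (decayKernel_nonneg _))
  obtain ⟨hmem, hnorm⟩ := memh1_and_h1norm_le (integrable_conv hφ₁ hf)
    ((integrable_conv hf.abs integrable_decayKernel).const_mul A) hmajorant₀ hle
  refine ⟨hmem, hnorm.trans ?_⟩
  rw [integral_const_mul, integral_conv hf.abs integrable_decayKernel]
  have hf₀ : 0 ≤ ∫ x, |f x| := integral_nonneg fun x => abs_nonneg _
  nlinarith

/-- Goldberg's lemma (i): for `φ ∈ C_c(ℝ^d)` with `supp φ ⊆ B(0,1)`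
and `∫ φ = 1`, there is `C = C(d,φ) > 0` such that `‖φ*f‖_{h¹} ≤ C ‖f‖_{L¹}` for
every `f ∈ L¹(ℝ^d)`. -/
theorem goldberg_i {d : ℕ} (φ : Euc d → ℝ) (hφ : φ ∈ CcFun d)
    (hsupp : tsupport φ ⊆ ball (0 : Euc d) 1) (hint : ∫ x, φ x = 1) :
    ∃ C : ℝ, 0 < C ∧ ∀ f : Euc d → ℝ, Integrable f →
      Memh1 (conv φ f) ∧ h1norm (conv φ f) ≤ C * ∫ x, |f x| :=
  goldberg_i_general φ hφ hsupp
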